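/- Let σ ∈ S*_{2n}, and let ν_0,...,ν_n ∈ (1/2)ℤ^{2n} satisfy the recursion ν_k = ν_{k-1} + (e_{σ(k)} − e_k + e_{k*} − e_{σ(k)*})/2 with all ν_k ∈ Conv({e_j − e_{j*} : j}) and ν_0 = e_j − e_{j*} for some j. If i is minimal with ν_{i-1} ≠ ν_i (equivalently, minimal with σ(i) ≠ i), then j = i or j = σ(i)*. -/

import Mathlib

/-!
Every `c` with entries in `[-1, 1]` satisfies `c ⬝ᵥ x ≤ 2` on the convex hull of the vectors
`e_k - e_{k*}`, since it does so on each of them. Up to step `i` the sequence stays at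
`ν_0 = e_j - e_{j*}`, and `ν_i = ν_0 + (e_{σ(i)} - e_i + e_{i*} - e_{σ(i)*}) / 2` with `σ(i) ≠ i`.
If `j ∉ {i, σ(i)*}`, the sets `{j, σ(i), i*}` and `{j*, σ(i)*, i}` are disjoint, and the vector
equal to `1` on the first and `-1` on the second gives `c ⬝ᵥ ν_i = 2 + 4 / 2 = 4 > 2`.
-/

/-- `rev n i = i*` where `i* = 2n+1-i` (0-based). -/
def rev (n : ℕ) (i : Fin (2 * n)) : Fin (2 * n) :=
  ⟨2 * n - 1 - i.val, by have := i.isLt; omega⟩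

/-- standard basis vector of ℝ^{2n}. -/
def eR (n : ℕ) (j : Fin (2 * n)) : Fin (2 * n) → ℝ := fun i => if i = j then 1 else 0

lemma exists_sign_vector {ι : Type*} {P N : Set ι} (h : Disjoint P N) :
    ∃ c : ι → ℝ, (∀ m, |c m| ≤ 1) ∧ (∀ m ∈ P, c m = 1) ∧ (∀ m ∈ N, c m = -1) := by
  classical
  refine ⟨fun m => if m ∈ P then 1 else if m ∈ N then -1 else 0, ?_, ?_, ?_⟩
  · intro m; dsimp only; split_ifs <;> norm_num
  · intro m hm; simp [hm]
  · intro m hm; simp [h.notMem_of_mem_right hm, hm]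

section SignedBasis

open Function

variable {ι : Type*} [Fintype ι] [DecidableEq ι]

lemma dotProduct_le_two_of_mem_convexHull {r : ι → ι} {c x : ι → ℝ} (hc : ∀ m, |c m| ≤ 1)
    (hx : x ∈ convexHull ℝ (Set.range fun k => Pi.single k 1 - Pi.single (r k) 1)) :
    c ⬝ᵥ x ≤ 2 := by
  have hlin : IsLinearMap ℝ (c ⬝ᵥ ·) := ⟨dotProduct_add c, fun a x => dotProduct_smul a c x⟩
  refine convexHull_min ?_ (convex_halfSpace_le hlin 2) hx
  rintro _ ⟨k, rfl⟩
  simp only [Set.mem_ofPred_eq, dotProduct_sub, dotProduct_single_one]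
  linarith [(abs_le.mp (hc k)).2, (abs_le.mp (hc (r k))).1]

lemma add_half_step_notMem_convexHull {r : ι → ι} (hr : Involutive r) (hfix : ∀ k, r k ≠ k)
    {j a s : ι} (hsa : s ≠ a) (hja : j ≠ a) (hjs : j ≠ r s) :
    (Pi.single j 1 - Pi.single (r j) 1 : ι → ℝ) +
        (1 / 2 : ℝ) • (Pi.single s 1 - Pi.single a 1 + Pi.single (r a) 1 - Pi.single (r s) 1) ∉
      convexHull ℝ (Set.range fun k => Pi.single k 1 - Pi.single (r k) 1) := by
  intro hmem
  have hdisj : Disjoint ({j, s, r a} : Set ι) {r j, r s, a} := by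
    simp only [Set.disjoint_insert_left, Set.disjoint_singleton_left, Set.mem_insert_iff,
      Set.mem_singleton_iff, hr.injective.eq_iff]
    refine ⟨?_, ?_, ?_⟩ <;> rintro (h | h | h)
    · exact hfix j h.symm
    · exact hjs h
    · exact hja h
    · exact hjs (by rw [h, hr])
    · exact hfix s h.symm
    · exact hsa h
    · exact hja h.symm
    · exact hsa h.symm
    · exact hfix a h
  obtain ⟨c, hc, hP, hN⟩ := exists_sign_vector hdisj
  have := dotProduct_le_two_of_mem_convexHull hc hmem
  norm_num [dotProduct_add, dotProduct_sub, dotProduct_smul, hP, hN] at this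

end SignedBasis

lemma eq_apply_zero_of_forall_eq_pred {α : Type*} {f : ℕ → α} {i : ℕ}
    (h : ∀ k, 1 ≤ k → k < i → f k = f (k - 1)) : ∀ k < i, f k = f 0
  | 0, _ => rfl
  | k + 1, hk => (h (k + 1) (by omega) hk).trans (eq_apply_zero_of_forall_eq_pred h k (by omega))

lemma eR_eq_single (n : ℕ) (j : Fin (2 * n)) : eR n j = Pi.single j 1 := by
  ext m
  simp [eR, Pi.single_apply]

lemma rev_involutive (n : ℕ) : Function.Involutive (rev n) := fun i => by
  ext
  simp only [rev]
  omega

lemma rev_ne_self (n : ℕ) (i : Fin (2 * n)) : rev n i ≠ i := fun h => by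
  have := congrArg Fin.val h
  simp only [rev] at this
  omega

lemma setOf_eR_sub_eR_rev (n : ℕ) :
    {v : Fin (2 * n) → ℝ | ∃ j : Fin (2 * n), v = fun m => eR n j m - eR n (rev n j) m} =
      Set.range fun k => Pi.single k 1 - Pi.single (rev n k) 1 := by
  ext v
  simp only [Set.mem_ofPred_eq, Set.mem_range, eq_comm (a := v), eR_eq_single]
  rfl

-- Indices of `Fin (2 * n)` are 0-based: the paper's index `i` is `⟨i - 1, _⟩`.
/-- let σ ∈ S*_{2n} and ν_0,...,ν_n satisfy the recursion
ν_k = ν_{k-1} + (e_{σ(k)} - e_k + e_{k*} - e_{σ(k)*})/2, all lying in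
Conv({e_j - e_{j*}}), with ν_0 = e_j - e_{j*}.  If i ∈ {1,...,n} is minimal with
ν_{i-1} ≠ ν_i, then j = i or j = σ(i)*.  (i corresponds to the 0-based index
iF = ⟨i-1⟩ : Fin (2n).) -/
theorem stmt15 (n : ℕ)
    (σ : Equiv.Perm (Fin (2 * n)))
    (ν : ℕ → Fin (2 * n) → ℝ)
    (hrec : ∀ k : Fin (2 * n), k.val + 1 ≤ n →
      ν (k.val + 1) = fun m => ν k.val m +
        (eR n (σ k) m - eR n k m + eR n (rev n k) m - eR n (rev n (σ k)) m) / 2)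
    (hconv : ∀ k ≤ n, ν k ∈ convexHull ℝ
      {v : Fin (2 * n) → ℝ | ∃ j : Fin (2 * n),
        v = fun m => eR n j m - eR n (rev n j) m})
    (j : Fin (2 * n))
    (hν0 : ν 0 = fun m => eR n j m - eR n (rev n j) m)
    (i : ℕ) (hi1 : 1 ≤ i) (hin : i ≤ n)
    (hmin : ∀ k : ℕ, 1 ≤ k → k < i → ν k = ν (k - 1))
    (hne : ν i ≠ ν (i - 1)) :
    j = (⟨i - 1, by omega⟩ : Fin (2 * n)) ∨
      j = rev n (σ ⟨i - 1, by omega⟩) := by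
  set a : Fin (2 * n) := ⟨i - 1, by omega⟩
  have hstep : ν i = ν (i - 1) + (1 / 2 : ℝ) • (Pi.single (σ a) 1 - Pi.single a 1 +
      Pi.single (rev n a) 1 - Pi.single (rev n (σ a)) 1) := by
    have h := hrec a (by simp only [a]; omega)
    rw [show a.val + 1 = i by simp only [a]; omega] at h
    rw [h]
    ext m
    simp only [eR_eq_single, one_div, Pi.add_apply, Pi.smul_apply, Pi.sub_apply, smul_eq_mul]
    ring
  have hσa : σ a ≠ a := fun h => hne (by rw [hstep, h]; simp)
  have hprev : ν (i - 1) = Pi.single j 1 - Pi.single (rev n j) 1 := by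
    rw [eq_apply_zero_of_forall_eq_pred hmin (i - 1) (by omega), hν0]
    ext m
    simp [eR_eq_single]
  by_contra! hja
  refine add_half_step_notMem_convexHull (rev_involutive n) (rev_ne_self n) hσa hja.1 hja.2 ?_
  rw [← hprev, ← hstep, ← setOf_eR_sub_eR_rev]
  exact hconv i hin
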